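/- arXiv:1409.3957 — 4 statements merged into one kernel-verified Lean document; each statement's English description precedes it below -/
import Mathlib

section
/- For scalar positive bounded and coercive spectral densities Φ and Ψ on the unit circle, lim_{α→1} S_A^{(α)}(Φ‖Ψ) = S_KL(Φ‖Ψ), where S_KL is the Kullback–Leibler divergence ∫ [Φ(log Φ − log Ψ) − Φ + Ψ]. -/
/-!
Writing `r = log a - log b`, one has `a ^ α * b ^ (1 - α) = a * exp ((α - 1) * r)`, so the
α-divergence integrand is `(a * (exp ((α - 1) * r) - 1) / (α - 1) - a + b) / α`: a difference
quotient of `exp` at `0`, which tends to `a * r - a + b`. Since `|exp y - 1| ≤ |y| * exp |y|` and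
`|r| ≤ log k₂ - log k₁`, the integrands are uniformly bounded for `|α - 1| ≤ 1 / 2`, and dominated
convergence on the (probability) measure `μc` finishes the proof.
-/

open MeasureTheory Real Filter Topology

instance : Fact (0 < 2 * π) := ⟨by positivity⟩

/-- The normalized Lebesgue measure on the unit circle (parametrized as `AddCircle (2π)`). -/
noncomputable def μc : Measure (AddCircle (2 * π)) := (ENNReal.ofReal (2 * π))⁻¹ • (volume : Measure (AddCircle (2 * π)))

instance : IsProbabilityMeasure μc :=
  ⟨by
    rw [μc, Measure.smul_apply, AddCircle.measure_univ, smul_eq_mul]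
    exact ENNReal.inv_mul_cancel (by simp [pi_pos]) ENNReal.ofReal_ne_top⟩

lemma abs_exp_sub_one_le_abs_mul_exp_abs (y : ℝ) : |exp y - 1| ≤ |y| * exp |y| := by
  rcases le_total 0 y with hy | hy
  · have : exp y * (1 - y) ≤ 1 := by
      calc exp y * (1 - y) ≤ exp y * exp (-y) := by gcongr; exact one_sub_le_exp_neg y
        _ = 1 := by rw [← exp_add, add_neg_cancel, exp_zero]
    rw [abs_of_nonneg (by linarith [add_one_le_exp y]), abs_of_nonneg hy]
    linarith
  · rw [abs_of_nonpos (by linarith [exp_le_one_iff.2 hy]), abs_of_nonpos hy]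
    nlinarith [add_one_le_exp y, one_le_exp (neg_nonneg.2 hy)]

lemma rpow_mul_rpow_one_sub {a b : ℝ} (ha : 0 < a) (hb : 0 < b) (α : ℝ) :
    a ^ α * b ^ (1 - α) = a * exp ((α - 1) * (log a - log b)) := by
  calc a ^ α * b ^ (1 - α) = exp (log a) * exp ((α - 1) * (log a - log b)) := by
        rw [rpow_def_of_pos ha, rpow_def_of_pos hb, ← exp_add, ← exp_add]; ring_nf
    _ = a * exp ((α - 1) * (log a - log b)) := by rw [exp_log ha]

lemma tendsto_exp_mul_sub_one_div (r : ℝ) :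
    Tendsto (fun α => (exp ((α - 1) * r) - 1) / (α - 1)) (𝓝[≠] 1) (𝓝 r) := by
  have h : HasDerivAt (fun α => exp ((α - 1) * r)) r 1 := by
    simpa using (((hasDerivAt_id (1 : ℝ)).sub_const 1).mul_const r).exp
  refine (hasDerivAt_iff_tendsto_slope.mp h).congr fun α => ?_
  simp [slope_def_field]

noncomputable def alphaIntegrand (α a b : ℝ) : ℝ :=
  1 / (α * (α - 1)) * a ^ α * b ^ (1 - α) - 1 / (α - 1) * a + 1 / α * b

noncomputable def klIntegrand (a b : ℝ) : ℝ := a * (log a - log b) - a + b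

lemma alphaIntegrand_eq {a b α : ℝ} (ha : 0 < a) (hb : 0 < b) (hα₀ : α ≠ 0) (hα₁ : α ≠ 1) :
    alphaIntegrand α a b =
      (a * ((exp ((α - 1) * (log a - log b)) - 1) / (α - 1)) - a + b) / α := by
  have : α - 1 ≠ 0 := sub_ne_zero.2 hα₁
  rw [alphaIntegrand, mul_assoc, rpow_mul_rpow_one_sub ha hb]
  field_simp
  ring

lemma tendsto_alphaIntegrand {a b : ℝ} (ha : 0 < a) (hb : 0 < b) :
    Tendsto (fun α => alphaIntegrand α a b) (𝓝[≠] 1) (𝓝 (klIntegrand a b)) := by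
  have h := ((((tendsto_exp_mul_sub_one_div (log a - log b)).const_mul a).sub_const a).add_const
    b).div (tendsto_id.mono_left nhdsWithin_le_nhds) one_ne_zero
  rw [div_one] at h
  refine h.congr' ?_
  filter_upwards [self_mem_nhdsWithin,
    nhdsWithin_le_nhds (eventually_ne_nhds one_ne_zero)] with α hα₁ hα₀
  exact (alphaIntegrand_eq ha hb hα₀ hα₁).symm

lemma abs_alphaIntegrand_le {a b α : ℝ} (ha : 0 < a) (hb : 0 < b) (hα : |α - 1| ≤ 1 / 2)
    (hα₁ : α ≠ 1) :
    |alphaIntegrand α a b| ≤ 2 * (a * |log a - log b| * exp |log a - log b| + a + b) := by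
  have hα_half : 1 / 2 ≤ |α| := by
    rw [abs_le] at hα; exact le_abs.2 (.inl (by linarith))
  rw [alphaIntegrand_eq ha hb (by rintro rfl; norm_num at hα_half) hα₁, abs_div,
    div_le_iff₀ (by linarith)]
  set r := log a - log b
  have hquot : |(exp ((α - 1) * r) - 1) / (α - 1)| ≤ |r| * exp |r| := by
    rw [abs_div, div_le_iff₀ (abs_pos.2 (sub_ne_zero.2 hα₁))]
    have hshrink : |(α - 1) * r| ≤ |r| := by
      rw [abs_mul]; exact mul_le_of_le_one_left (abs_nonneg r) (by linarith)
    calc |exp ((α - 1) * r) - 1| ≤ |(α - 1) * r| * exp |(α - 1) * r| :=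
          abs_exp_sub_one_le_abs_mul_exp_abs _
      _ ≤ |(α - 1) * r| * exp |r| :=
          mul_le_mul_of_nonneg_left (exp_le_exp.2 hshrink) (abs_nonneg _)
      _ = |r| * exp |r| * |α - 1| := by rw [abs_mul]; ring
  have hnum : |a * ((exp ((α - 1) * r) - 1) / (α - 1)) - a + b| ≤ a * |r| * exp |r| + a + b := by
    calc _ ≤ |a * ((exp ((α - 1) * r) - 1) / (α - 1))| + |a| + |b| :=
          (abs_add_le _ _).trans (add_le_add_left (abs_sub _ _) _)
      _ ≤ _ := by
          rw [abs_mul, abs_of_pos ha, abs_of_pos hb, mul_assoc a]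
          gcongr
  have hM : 0 ≤ a * |r| * exp |r| + a + b := by positivity
  nlinarith

lemma abs_log_sub_log_le {k₁ k₂ a b : ℝ} (hk₁ : 0 < k₁) (ha : a ∈ Set.Icc k₁ k₂)
    (hb : b ∈ Set.Icc k₁ k₂) : |log a - log b| ≤ log k₂ - log k₁ := by
  have hlog {c : ℝ} (hc : c ∈ Set.Icc k₁ k₂) : log k₁ ≤ log c ∧ log c ≤ log k₂ :=
    ⟨log_le_log hk₁ hc.1, log_le_log (hk₁.trans_le hc.1) hc.2⟩
  rw [abs_sub_le_iff]
  constructor <;> linarith [hlog ha, hlog hb]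

/-- the Alpha divergence tends to the Kullback–Leibler divergence
`S_KL(Φ‖Ψ)` as α → 1. -/
theorem alpha_divergence_limit_one
    (Φ Ψ : AddCircle (2 * π) → ℝ) (hΦm : Measurable Φ) (hΨm : Measurable Ψ)
    (k₁ k₂ : ℝ) (hk₁ : 0 < k₁)
    (hΦ : ∀ x, k₁ ≤ Φ x ∧ Φ x ≤ k₂) (hΨ : ∀ x, k₁ ≤ Ψ x ∧ Ψ x ≤ k₂) :
    Tendsto (fun α : ℝ => ∫ x, (1 / (α * (α - 1)) * Φ x ^ α * Ψ x ^ (1 - α) - 1 / (α - 1) * Φ x + 1 / α * Ψ x) ∂μc)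
      (𝓝[≠] (1 : ℝ)) (𝓝 (∫ x, (Φ x * (Real.log (Φ x) - Real.log (Ψ x)) - Φ x + Ψ x) ∂μc)) := by
  have hpos (x) : 0 < Φ x ∧ 0 < Ψ x := ⟨hk₁.trans_le (hΦ x).1, hk₁.trans_le (hΨ x).1⟩
  have hk : k₁ ≤ k₂ := (hΦ 0).1.trans (hΦ 0).2
  set R := log k₂ - log k₁
  have hR (x) : |log (Φ x) - log (Ψ x)| ≤ R := abs_log_sub_log_le hk₁ (hΦ x) (hΨ x)
  have hnear : ∀ᶠ α in 𝓝[≠] (1 : ℝ), |α - 1| ≤ 1 / 2 ∧ α ≠ 1 := by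
    filter_upwards [self_mem_nhdsWithin, nhdsWithin_le_nhds
      (Metric.closedBall_mem_nhds (1 : ℝ) one_half_pos)] with α hα₁ hα
    exact ⟨hα, hα₁⟩
  refine tendsto_integral_filter_of_dominated_convergence (fun _ => 2 * (k₂ * R * exp R + k₂ + k₂))
    (.of_forall fun α => by fun_prop) ?_ (integrable_const _)
    (.of_forall fun x => tendsto_alphaIntegrand (hpos x).1 (hpos x).2)
  filter_upwards [hnear] with α ⟨hα, hα₁⟩
  refine .of_forall fun x => (abs_alphaIntegrand_le (hpos x).1 (hpos x).2 hα hα₁).trans ?_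
  have := (hΦ x).2; have := (hΨ x).2; have := hR x
  have : 0 ≤ R := sub_nonneg.2 (log_le_log hk₁ hk)
  have : 0 ≤ k₂ := hk₁.le.trans hk
  gcongr
end

section
/- For scalar positive bounded and coercive spectral densities Φ and Ψ on the unit circle, lim_{β→0} S_B^{(β)}(Φ‖Ψ) = S_IS(Φ‖Ψ), where S_IS(Φ‖Ψ) = ∫ [log Ψ − log Φ + Φ/Ψ − 1] is the Itakura–Saito distance. -/
/-!
For `β ≠ 0, 1` the integrand equals
`((a ^ β - 1) / β - (b ^ β - 1) / β + b ^ β - a * b ^ (β - 1)) / (β - 1)`: the poles at `β = 0`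
combine into difference quotients of `β ↦ a ^ β` and `β ↦ b ^ β` at `0`, which tend to `log a` and
`log b`, so the integrand tends pointwise to the Itakura–Saito integrand. Since
`|(c ^ β - 1) / β| ≤ 2 |log c|` once `|β log c| ≤ 1`, and `log Φ`, `log Ψ` are bounded, the
integrands are uniformly bounded for small `β`, and dominated convergence on the (probability)
circle concludes.
-/

open MeasureTheory Real Filter Topology

instance inst_s4 : IsProbabilityMeasure μc :=
  ⟨by
    rw [μc, Measure.smul_apply, AddCircle.measure_univ, smul_eq_mul]
    exact ENNReal.inv_mul_cancel (by simp [Real.pi_pos]) ENNReal.ofReal_ne_top⟩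

noncomputable def betaDivergence (β a b : ℝ) : ℝ :=
  1 / (β * (β - 1)) * a ^ β - 1 / (β - 1) * a * b ^ (β - 1) + 1 / β * b ^ β

noncomputable def itakuraSaito (a b : ℝ) : ℝ :=
  log b - log a + a / b - 1

theorem betaDivergence_eq {β : ℝ} (hβ₀ : β ≠ 0) (hβ₁ : β ≠ 1) (a b : ℝ) :
    betaDivergence β a b =
      ((a ^ β - 1) / β - (b ^ β - 1) / β + b ^ β - a * b ^ (β - 1)) / (β - 1) := by
  have : β - 1 ≠ 0 := sub_ne_zero.2 hβ₁
  unfold betaDivergence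
  field_simp
  ring

theorem tendsto_rpow_sub_one_div {a : ℝ} (ha : 0 < a) :
    Tendsto (fun β : ℝ => (a ^ β - 1) / β) (𝓝[≠] 0) (𝓝 (log a)) := by
  have h := (hasStrictDerivAt_const_rpow ha 0).hasDerivAt.tendsto_slope
  simpa [slope_fun_def_field] using h

theorem abs_rpow_sub_one_div_le {c β : ℝ} (hc : 0 < c) (h : |β * log c| ≤ 1) :
    |(c ^ β - 1) / β| ≤ 2 * |log c| := by
  rcases eq_or_ne β 0 with rfl | hβ
  · simp
  rw [abs_div, div_le_iff₀ (abs_pos.2 hβ), rpow_def_of_pos hc, mul_comm (log c)]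
  calc |exp (β * log c) - 1| ≤ 2 * |β * log c| := abs_exp_sub_one_le h
    _ = 2 * |log c| * |β| := by rw [abs_mul]; ring

theorem abs_rpow_le_exp {c : ℝ} (hc : 0 < c) (t : ℝ) : |c ^ t| ≤ exp (|t| * |log c|) := by
  rw [rpow_def_of_pos hc, abs_of_pos (exp_pos _), ← abs_mul, mul_comm t]
  exact exp_le_exp.2 (le_abs_self _)

theorem tendsto_betaDivergence {a b : ℝ} (ha : 0 < a) (hb : 0 < b) :
    Tendsto (fun β => betaDivergence β a b) (𝓝[≠] 0) (𝓝 (itakuraSaito a b)) := by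
  have hpow : Continuous (fun β : ℝ => b ^ β) :=
    continuous_const.rpow continuous_id fun _ => Or.inl hb.ne'
  have hrest : Continuous (fun β : ℝ => b ^ β - a * b ^ (β - 1)) :=
    hpow.sub (continuous_const.mul (hpow.comp (continuous_sub_right 1)))
  have hlim := (((tendsto_rpow_sub_one_div ha).sub (tendsto_rpow_sub_one_div hb)).add
    ((hrest.tendsto 0).mono_left nhdsWithin_le_nhds)).div
    ((continuous_sub_right (1 : ℝ)).continuousAt.tendsto.mono_left nhdsWithin_le_nhds)
    (by norm_num)
  have hvalue : (log a - log b + (b ^ (0 : ℝ) - a * b ^ ((0 : ℝ) - 1))) / ((0 : ℝ) - 1) =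
      itakuraSaito a b := by
    simp only [itakuraSaito, rpow_zero, zero_sub, rpow_neg_one]
    ring
  rw [← hvalue]
  refine hlim.congr' ?_
  filter_upwards [self_mem_nhdsWithin,
    (eventually_ne_nhds (zero_ne_one' ℝ)).filter_mono nhdsWithin_le_nhds] with β hβ₀ hβ₁
  rw [betaDivergence_eq hβ₀ hβ₁, Pi.div_apply]
  ring

theorem abs_betaDivergence_le {β a b L : ℝ} (hβ₀ : β ≠ 0) (hβ : |β| ≤ 1 / 2) (hβL : |β| * L ≤ 1)
    (ha : 0 < a) (hb : 0 < b) (haL : |log a| ≤ L) (hbL : |log b| ≤ L) :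
    |betaDivergence β a b| ≤ 2 * (4 * L + exp L + exp (3 * L)) := by
  have hL : 0 ≤ L := (abs_nonneg _).trans haL
  have hβ₁ : β ≠ 1 := by rintro rfl; norm_num at hβ
  have hβsub : 1 / 2 ≤ |β - 1| ∧ |β - 1| ≤ 2 := by
    constructor <;> cases abs_le.1 hβ <;> rw [abs_sub_comm, abs_of_pos (by linarith)] <;> linarith
  have hslope : ∀ c, 0 < c → |log c| ≤ L → |(c ^ β - 1) / β| ≤ 2 * L := fun c hc hcL =>
    (abs_rpow_sub_one_div_le hc (by rw [abs_mul]; nlinarith [abs_nonneg β])).trans (by linarith)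
  have hbβ : |b ^ β| ≤ exp L :=
    (abs_rpow_le_exp hb β).trans (exp_le_exp.2 (by nlinarith [abs_nonneg β, abs_nonneg (log b)]))
  have habβ : |a * b ^ (β - 1)| ≤ exp (3 * L) := by
    have hexp : 3 * L = L + 2 * L := by ring
    rw [abs_mul, abs_of_pos ha, hexp, exp_add, ← exp_log ha]
    gcongr
    · exact (le_abs_self _).trans haL
    · exact (abs_rpow_le_exp hb _).trans
        (exp_le_exp.2 (by nlinarith [abs_nonneg (β - 1), abs_nonneg (log b)]))
  have hnum : |(a ^ β - 1) / β - (b ^ β - 1) / β + b ^ β - a * b ^ (β - 1)| ≤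
      4 * L + exp L + exp (3 * L) := by
    have := abs_sub ((a ^ β - 1) / β - (b ^ β - 1) / β + b ^ β) (a * b ^ (β - 1))
    have := abs_add_le ((a ^ β - 1) / β - (b ^ β - 1) / β) (b ^ β)
    have := abs_sub ((a ^ β - 1) / β) ((b ^ β - 1) / β)
    linarith [hslope a ha haL, hslope b hb hbL]
  rw [betaDivergence_eq hβ₀ hβ₁, abs_div, div_le_iff₀ (by linarith)]
  nlinarith [exp_pos L, exp_pos (3 * L)]

theorem eventually_abs_betaDivergence_le (L : ℝ) :
    ∀ᶠ β in 𝓝[≠] 0, ∀ a b, 0 < a → 0 < b → |log a| ≤ L → |log b| ≤ L →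
      |betaDivergence β a b| ≤ 2 * (4 * L + exp L + exp (3 * L)) := by
  have hsmall : ∀ᶠ β : ℝ in 𝓝 0, |β| < 1 / 2 ∧ |β| * L < 1 := by
    have h : Tendsto (fun β : ℝ => |β|) (𝓝 0) (𝓝 0) := continuous_abs.tendsto' 0 0 abs_zero
    have hL : Tendsto (fun β : ℝ => |β| * L) (𝓝 0) (𝓝 0) := by simpa using h.mul_const L
    exact (h.eventually_lt_const (by norm_num)).and (hL.eventually_lt_const one_pos)
  filter_upwards [self_mem_nhdsWithin, hsmall.filter_mono nhdsWithin_le_nhds]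
    with β hβ₀ hβ a b ha hb haL hbL
  exact abs_betaDivergence_le hβ₀ hβ.1.le hβ.2.le ha hb haL hbL

/-- the Beta divergence tends to the Itakura–Saito distance as β → 0. -/
theorem beta_divergence_limit_zero
    (Φ Ψ : AddCircle (2 * π) → ℝ) (hΦm : Measurable Φ) (hΨm : Measurable Ψ)
    (k₁ k₂ : ℝ) (hk₁ : 0 < k₁)
    (hΦ : ∀ x, k₁ ≤ Φ x ∧ Φ x ≤ k₂) (hΨ : ∀ x, k₁ ≤ Ψ x ∧ Ψ x ≤ k₂) :
    Tendsto (fun β : ℝ => ∫ x, (1 / (β * (β - 1)) * Φ x ^ β - 1 / (β - 1) * Φ x * Ψ x ^ (β - 1) + 1 / β * Ψ x ^ β) ∂μc)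
      (𝓝[≠] (0 : ℝ)) (𝓝 (∫ x, (Real.log (Ψ x) - Real.log (Φ x) + Φ x / Ψ x - 1) ∂μc)) := by
  set L := max |log k₁| |log k₂|
  have hbounds : ∀ f : AddCircle (2 * π) → ℝ, (∀ x, k₁ ≤ f x ∧ f x ≤ k₂) →
      ∀ x, 0 < f x ∧ |log (f x)| ≤ L := fun f hf x =>
    ⟨hk₁.trans_le (hf x).1, abs_le_max_abs_abs (log_le_log hk₁ (hf x).1)
      (log_le_log (hk₁.trans_le (hf x).1) (hf x).2)⟩
  refine tendsto_integral_filter_of_dominated_convergence (fun _ => 2 * (4 * L + exp L + exp (3 * L)))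
    (Eventually.of_forall fun β => (by fun_prop : Measurable _).aestronglyMeasurable) ?_
    (integrable_const _) (ae_of_all _ fun x =>
      tendsto_betaDivergence (hbounds Φ hΦ x).1 (hbounds Ψ hΨ x).1)
  filter_upwards [eventually_abs_betaDivergence_le L] with β hβ
  exact ae_of_all _ fun x => hβ _ _ (hbounds Φ hΦ x).1 (hbounds Ψ hΨ x).1
    (hbounds Φ hΦ x).2 (hbounds Ψ hΨ x).2
end

section
/- For scalar positive bounded and coercive spectral densities Φ and Ψ on the unit circle, lim_{β→1} S_B^{(β)}(Φ‖Ψ) = S_KL(Φ‖Ψ) = ∫ [Φ(log Φ − log Ψ) − Φ + Ψ]. -/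
open MeasureTheory Real Filter Topology

instance : IsFiniteMeasure μc := by
  constructor
  rw [μc, Measure.smul_apply, smul_eq_mul, AddCircle.measure_univ]
  exact ENNReal.mul_lt_top (ENNReal.inv_lt_top.2 (ENNReal.ofReal_pos.2 (by positivity))) ENNReal.ofReal_lt_top

lemma rpow_bound {k₁ k₂ c t : ℝ} (hk₁ : 0 < k₁) (h1 : k₁ ≤ c) (h2 : c ≤ k₂) (ht : |t| ≤ 2) :
    c ^ t ≤ Real.exp (2 * (|Real.log k₁| + |Real.log k₂|)) ∧
      |Real.log c| ≤ |Real.log k₁| + |Real.log k₂| := by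
  have hc : 0 < c := lt_of_lt_of_le hk₁ h1
  have hlog : |Real.log c| ≤ |Real.log k₁| + |Real.log k₂| := by
    have l1 : Real.log k₁ ≤ Real.log c := Real.log_le_log hk₁ h1
    have l2 : Real.log c ≤ Real.log k₂ := Real.log_le_log hc h2
    rw [abs_le]
    constructor
    · have := neg_abs_le (Real.log k₁); nlinarith [abs_nonneg (Real.log k₂)]
    · have := le_abs_self (Real.log k₂); nlinarith [abs_nonneg (Real.log k₁)]
  refine ⟨?_, hlog⟩
  rw [Real.rpow_def_of_pos hc]
  apply Real.exp_le_exp.2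
  calc Real.log c * t = t * Real.log c := by ring
    _ ≤ |t * Real.log c| := le_abs_self _
    _ = |t| * |Real.log c| := abs_mul _ _
    _ ≤ 2 * (|Real.log k₁| + |Real.log k₂|) := by
        apply mul_le_mul ht hlog (abs_nonneg _) (by norm_num)

lemma hasDerivG (a b : ℝ) (ha : 0 < a) (hb : 0 < b) (t : ℝ) (ht : t ≠ 0) :
    HasDerivAt (fun s : ℝ => a ^ s * s⁻¹ - a * b ^ (s - 1))
      (a ^ t * Real.log a * t⁻¹ + a ^ t * (-(t ^ 2)⁻¹) - a * (b ^ (t - 1) * Real.log b * 1)) t := by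
  have h1 := (Real.hasStrictDerivAt_const_rpow ha t).hasDerivAt
  have h2 := hasDerivAt_inv ht
  have h4 : HasDerivAt (fun s : ℝ => s - 1) 1 t := (hasDerivAt_id t).sub_const 1
  have h5 := ((Real.hasStrictDerivAt_const_rpow hb (t - 1)).hasDerivAt.comp t h4)
  exact (h1.mul h2).sub (h5.const_mul a)

lemma bound_aux (k₁ k₂ L E : ℝ) (hk₁ : 0 < k₁)
    (hL : L = |Real.log k₁| + |Real.log k₂|) (hE : E = Real.exp (2 * L)) :
    ∀ β : ℝ, β ∈ Set.Icc (1/2 : ℝ) (3/2 : ℝ) → β ≠ 1 → ∀ a b : ℝ,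
      k₁ ≤ a → a ≤ k₂ → k₁ ≤ b → b ≤ k₂ →
      |1 / (β * (β - 1)) * a ^ β - 1 / (β - 1) * a * b ^ (β - 1) + 1 / β * b ^ β| ≤
        E * L * 2 + E * 4 + k₂ * (E * L) + E * 2 := by
  have hLpos : 0 ≤ L := by rw [hL]; positivity
  have hEpos : 0 < E := by rw [hE]; positivity
  have hELpos : 0 ≤ E * L := mul_nonneg hEpos.le hLpos
  intro β hβmem hβ1 a b ha1 ha2 hb1 hb2
  obtain ⟨hβl, hβu⟩ := hβmem
  have ha : 0 < a := lt_of_lt_of_le hk₁ ha1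
  have hb : 0 < b := lt_of_lt_of_le hk₁ hb1
  have hk2 : 0 < k₂ := lt_of_lt_of_le ha ha2
  have hderiv : ∀ t ∈ Set.Icc (1/2 : ℝ) (3/2 : ℝ),
      HasDerivWithinAt (fun u : ℝ => a ^ u * u⁻¹ - a * b ^ (u - 1))
      (a ^ t * Real.log a * t⁻¹ + a ^ t * (-(t ^ 2)⁻¹) - a * (b ^ (t - 1) * Real.log b * 1))
      (Set.Icc (1/2 : ℝ) (3/2 : ℝ)) t := by
    intro t ht
    exact (hasDerivG a b ha hb t (by rcases ht with ⟨h, _⟩; intro h0; rw [h0] at h; norm_num at h)).hasDerivWithinAt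
  have hbnd : ∀ t ∈ Set.Icc (1/2 : ℝ) (3/2 : ℝ),
      ‖a ^ t * Real.log a * t⁻¹ + a ^ t * (-(t ^ 2)⁻¹) - a * (b ^ (t - 1) * Real.log b * 1)‖ ≤
      E * L * 2 + E * 4 + k₂ * (E * L) := by
    intro t ht
    rcases ht with ⟨ht1, ht2⟩
    have htpos : 0 < t := by linarith
    have hat : a ^ t ≤ E ∧ |Real.log a| ≤ L := by
      rw [hL] at *; rw [hE]; exact rpow_bound hk₁ ha1 ha2 (by rw [abs_le]; constructor <;> linarith)
    have hbt : b ^ (t - 1) ≤ E ∧ |Real.log b| ≤ L := by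
      rw [hL] at *; rw [hE]; exact rpow_bound hk₁ hb1 hb2 (by rw [abs_le]; constructor <;> linarith)
    have hatpos : (0:ℝ) < a ^ t := Real.rpow_pos_of_pos ha t
    have hbtpos : (0:ℝ) < b ^ (t - 1) := Real.rpow_pos_of_pos hb _
    have hinv : t⁻¹ ≤ 2 := by
      rw [inv_le_comm₀ (by linarith) (by norm_num)]; linarith
    have hinv2 : (t ^ 2)⁻¹ ≤ 4 := by
      rw [inv_le_comm₀ (by positivity) (by norm_num)]; nlinarith
    have hinvpos : 0 < t⁻¹ := by positivity
    have hinv2pos : 0 < (t ^ 2)⁻¹ := by positivity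
    have e1 : |a ^ t * Real.log a * t⁻¹| ≤ E * L * 2 := by
      rw [abs_mul, abs_mul, abs_of_pos hatpos, abs_of_pos hinvpos]
      have h1 : a ^ t * |Real.log a| ≤ E * L :=
        mul_le_mul hat.1 hat.2 (abs_nonneg _) hEpos.le
      exact mul_le_mul h1 hinv hinvpos.le hELpos
    have e2 : |a ^ t * (-(t ^ 2)⁻¹)| ≤ E * 4 := by
      rw [abs_mul, abs_neg, abs_of_pos hatpos, abs_of_pos hinv2pos]
      exact mul_le_mul hat.1 hinv2 hinv2pos.le hEpos.le
    have e3 : |(-(a * (b ^ (t - 1) * Real.log b * 1)))| ≤ k₂ * (E * L) := by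
      rw [abs_neg, mul_one, abs_mul, abs_mul, abs_of_pos ha, abs_of_pos hbtpos]
      have h1 : b ^ (t - 1) * |Real.log b| ≤ E * L :=
        mul_le_mul hbt.1 hbt.2 (abs_nonneg _) hEpos.le
      exact mul_le_mul ha2 h1 (mul_nonneg hbtpos.le (abs_nonneg _)) hk2.le
    rw [Real.norm_eq_abs]
    calc |a ^ t * Real.log a * t⁻¹ + a ^ t * (-(t ^ 2)⁻¹) - a * (b ^ (t - 1) * Real.log b * 1)|
        = |a ^ t * Real.log a * t⁻¹ + a ^ t * (-(t ^ 2)⁻¹) + (-(a * (b ^ (t - 1) * Real.log b * 1)))| := by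
          rw [sub_eq_add_neg]
      _ ≤ |a ^ t * Real.log a * t⁻¹| + |a ^ t * (-(t ^ 2)⁻¹)| + |(-(a * (b ^ (t - 1) * Real.log b * 1)))| :=
          abs_add_three _ _ _
      _ ≤ E * L * 2 + E * 4 + k₂ * (E * L) := add_le_add (add_le_add e1 e2) e3
  have hmvT := (convex_Icc (1/2 : ℝ) (3/2 : ℝ)).norm_image_sub_le_of_norm_hasDerivWithin_le
      hderiv hbnd (by constructor <;> norm_num : (1:ℝ) ∈ Set.Icc (1/2 : ℝ) (3/2 : ℝ)) ⟨hβl, hβu⟩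
  have hG1 : a ^ (1:ℝ) * (1:ℝ)⁻¹ - a * b ^ ((1:ℝ) - 1) = 0 := by
    norm_num [Real.rpow_one]
  rw [Real.norm_eq_abs, Real.norm_eq_abs, hG1, sub_zero] at hmvT
  have hβ0 : β ≠ 0 := by intro h; rw [h] at hβl; norm_num at hβl
  have hβ1' : β - 1 ≠ 0 := sub_ne_zero.2 hβ1
  have hsplit : 1 / (β * (β - 1)) * a ^ β - 1 / (β - 1) * a * b ^ (β - 1) + 1 / β * b ^ β
      = (a ^ β * β⁻¹ - a * b ^ (β - 1)) / (β - 1) + b ^ β * β⁻¹ := by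
    field_simp
  rw [hsplit]
  have h1 : |(a ^ β * β⁻¹ - a * b ^ (β - 1)) / (β - 1)| ≤
      E * L * 2 + E * 4 + k₂ * (E * L) := by
    rw [abs_div, div_le_iff₀ (abs_pos.2 hβ1')]
    exact hmvT
  have h2 : |b ^ β * β⁻¹| ≤ E * 2 := by
    have hβpos : 0 < β := by linarith
    have hbE : b ^ β ≤ E := by
      rw [hE, hL]
      exact (rpow_bound hk₁ hb1 hb2 (by rw [abs_le]; constructor <;> linarith)).1
    rw [abs_mul, abs_of_pos (Real.rpow_pos_of_pos hb β), abs_of_pos (by positivity : (0:ℝ) < β⁻¹)]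
    have hinv : β⁻¹ ≤ 2 := by rw [inv_le_comm₀ hβpos (by norm_num)]; linarith
    exact mul_le_mul hbE hinv (by positivity) hEpos.le
  calc |(a ^ β * β⁻¹ - a * b ^ (β - 1)) / (β - 1) + b ^ β * β⁻¹|
      ≤ |(a ^ β * β⁻¹ - a * b ^ (β - 1)) / (β - 1)| + |b ^ β * β⁻¹| := abs_add_le _ _
    _ ≤ E * L * 2 + E * 4 + k₂ * (E * L) + E * 2 := add_le_add h1 h2

lemma ptlim (a b : ℝ) (ha : 0 < a) (hb : 0 < b) :
    Tendsto (fun β : ℝ => 1 / (β * (β - 1)) * a ^ β - 1 / (β - 1) * a * b ^ (β - 1) + 1 / β * b ^ β)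
      (𝓝[≠] (1 : ℝ)) (𝓝 (a * (Real.log a - Real.log b) - a + b)) := by
  have hG : HasDerivAt (fun s : ℝ => a ^ s * s⁻¹ - a * b ^ (s - 1))
      (a * Real.log a - a - a * Real.log b) 1 := by
    have := hasDerivG a b ha hb 1 one_ne_zero
    simpa using this.congr_deriv (by norm_num [Real.rpow_one]; ring)
  have hslope := hasDerivAt_iff_tendsto_slope.mp hG
  have h2 : Tendsto (fun β : ℝ => b ^ β * β⁻¹) (𝓝[≠] (1:ℝ)) (𝓝 b) := by
    have hc : ContinuousAt (fun β : ℝ => b ^ β * β⁻¹) 1 :=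
      ((Real.hasStrictDerivAt_const_rpow hb 1).hasDerivAt.continuousAt).mul
        (continuousAt_inv₀ one_ne_zero)
    have := hc.tendsto.mono_left (nhdsWithin_le_nhds (s := {(1:ℝ)}ᶜ))
    simpa using this
  have hsum := hslope.add h2
  have hval : a * Real.log a - a - a * Real.log b + b = a * (Real.log a - Real.log b) - a + b := by ring
  rw [hval] at hsum
  refine hsum.congr' ?_
  filter_upwards [self_mem_nhdsWithin,
    eventually_nhdsWithin_of_eventually_nhds (eventually_ne_nhds one_ne_zero)] with β hβ1 hβ0
  have hβ1' : β - 1 ≠ 0 := sub_ne_zero.2 hβ1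
  simp only [slope_def_field, Real.rpow_one, sub_self, Real.rpow_zero]
  field_simp
  ring

lemma meas_rpow {α : Type*} [MeasurableSpace α] {f : α → ℝ} (hf : Measurable f)
    (hpos : ∀ x, 0 < f x) (c : ℝ) : Measurable (fun x => f x ^ c) := by
  have h : (fun x => f x ^ c) = fun x => Real.exp (Real.log (f x) * c) :=
    funext fun x => Real.rpow_def_of_pos (hpos x) c
  rw [h]
  exact Real.measurable_exp.comp ((Real.measurable_log.comp hf).mul measurable_const)

/-- the Beta divergence tends to the Kullback–Leibler divergence as β → 1. -/
theorem beta_divergence_limit_one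
    (Φ Ψ : AddCircle (2 * π) → ℝ) (hΦm : Measurable Φ) (hΨm : Measurable Ψ)
    (k₁ k₂ : ℝ) (hk₁ : 0 < k₁)
    (hΦ : ∀ x, k₁ ≤ Φ x ∧ Φ x ≤ k₂) (hΨ : ∀ x, k₁ ≤ Ψ x ∧ Ψ x ≤ k₂) :
    Tendsto (fun β : ℝ => ∫ x, (1 / (β * (β - 1)) * Φ x ^ β - 1 / (β - 1) * Φ x * Ψ x ^ (β - 1) + 1 / β * Ψ x ^ β) ∂μc)
      (𝓝[≠] (1 : ℝ)) (𝓝 (∫ x, (Φ x * (Real.log (Φ x) - Real.log (Ψ x)) - Φ x + Ψ x) ∂μc)) := by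
  set L : ℝ := |Real.log k₁| + |Real.log k₂| with hL
  set E : ℝ := Real.exp (2 * L) with hE
  apply tendsto_integral_filter_of_dominated_convergence
      (bound := fun _ => E * L * 2 + E * 4 + k₂ * (E * L) + E * 2)
  · filter_upwards with β
    have hΦp : ∀ x, 0 < Φ x := fun x => lt_of_lt_of_le hk₁ (hΦ x).1
    have hΨp : ∀ x, 0 < Ψ x := fun x => lt_of_lt_of_le hk₁ (hΨ x).1
    exact ((((meas_rpow hΦm hΦp β).const_mul _).sub
      ((hΦm.const_mul _).mul (meas_rpow hΨm hΨp (β - 1)))).add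
      ((meas_rpow hΨm hΨp β).const_mul _)).aestronglyMeasurable
  · have hIcc : ∀ᶠ β in 𝓝[≠] (1:ℝ), β ∈ Set.Icc (1/2 : ℝ) (3/2 : ℝ) :=
      eventually_nhdsWithin_of_eventually_nhds (Icc_mem_nhds (by norm_num) (by norm_num))
    filter_upwards [hIcc, self_mem_nhdsWithin] with β hβ hβ1
    apply Filter.Eventually.of_forall
    intro x
    rw [Real.norm_eq_abs]
    have h := bound_aux k₁ k₂ L E hk₁ hL hE β hβ hβ1 (Φ x) (Ψ x)
      (hΦ x).1 (hΦ x).2 (hΨ x).1 (hΨ x).2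
    convert h using 3
  · exact integrable_const _
  · apply Filter.Eventually.of_forall
    intro x
    exact ptlim (Φ x) (Ψ x) (lt_of_lt_of_le hk₁ (hΦ x).1) (lt_of_lt_of_le hk₁ (hΨ x).1)
end

section
/- Pointwise inequality underlying Beta divergence nonnegativity: for all x, y > 0 and β ∈ ℝ with β ≠ 0, β ≠ 1, one has (1/(β(β−1))) x^β − (1/(β−1)) x y^{β−1} + (1/β) y^β ≥ 0, with equality if and only if x = y. -/
open Real

/-- Strict Bernoulli-type inequality: for `t > 0`, `t ≠ 1` and exponent `β` with
`β ≠ 0`, `β ≠ 1`, the quantity `β (β - 1) (t^β - 1 - β (t-1))` is positive. -/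
lemma beta_bernoulli_aux {t β : ℝ} (ht : 0 < t) (ht1 : t ≠ 1)
    (hβ0 : β ≠ 0) (hβ1 : β ≠ 1) :
    0 < β * (β - 1) * (t ^ β - 1 - β * (t - 1)) := by
  have hs : (-1 : ℝ) ≤ t - 1 := by linarith
  have hs' : t - 1 ≠ 0 := sub_ne_zero.mpr ht1
  have htβ : (1 + (t - 1)) = t := by ring
  rcases lt_trichotomy β 0 with hβneg | h | hβpos
  · -- β < 0 : need t^β - 1 - β(t-1) > 0
    have hprod : 0 < β * (β - 1) := mul_pos_of_neg_of_neg hβneg (by linarith)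
    have key : 1 + β * (t - 1) < t ^ β := by
      rcases lt_or_ge (-β) 1 with hb1 | hb1
      · -- -1 < β < 0 : reciprocal trick
        have h1 : t ^ (-β) < 1 + (-β) * (t - 1) := by
          have := rpow_one_add_lt_one_add_mul_self hs hs' (p := -β)
            (by linarith) hb1
          rwa [htβ] at this
        have hbpos : 0 < 1 + (-β) * (t - 1) := by
          rcases lt_or_gt_of_ne ht1 with h' | h'
          · nlinarith
          · nlinarith
        have htpos : 0 < t ^ (-β) := rpow_pos_of_pos ht _
        have h2 : t ^ β = (t ^ (-β))⁻¹ := by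
          rw [← rpow_neg ht.le, neg_neg]
        rw [h2]
        have h3 : (1 + (-β) * (t - 1))⁻¹ < (t ^ (-β))⁻¹ := by
          exact inv_strictAnti₀ htpos h1
        have h4 : 1 + β * (t - 1) ≤ (1 + (-β) * (t - 1))⁻¹ := by
          rw [← one_div, le_div_iff₀ hbpos]
          nlinarith [sq_nonneg (β * (t - 1))]
        linarith
      · -- β ≤ -1 : use Bernoulli with 1/t
        have hinvpos : (0:ℝ) < t⁻¹ := by positivity
        have hsi : (-1 : ℝ) ≤ t⁻¹ - 1 := by linarith
        have h1 : 1 + (-β) * (t⁻¹ - 1) ≤ (1 + (t⁻¹ - 1)) ^ (-β) :=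
          one_add_mul_self_le_rpow_one_add hsi hb1
        have h2 : (1 + (t⁻¹ - 1)) = t⁻¹ := by ring
        have hrw : t⁻¹ ^ (-β) = t ^ β := by
          rw [inv_rpow ht.le, ← rpow_neg ht.le, neg_neg]
        rw [h2, hrw] at h1
        have hsq : 0 < (t - 1)^2 := by positivity
        have hid : t⁻¹ - 1 + (t - 1) = t⁻¹ * (t - 1)^2 := by
          field_simp
          ring
        have h5 : 1 + β * (t - 1) < 1 + (-β) * (t⁻¹ - 1) := by
          nlinarith [mul_pos hinvpos hsq]
        linarith
    nlinarith
  · exact absurd h hβ0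
  · rcases lt_trichotomy β 1 with hβlt | h | hβgt
    · -- 0 < β < 1
      have hprod : β * (β - 1) < 0 := mul_neg_of_pos_of_neg hβpos (by linarith)
      have key : t ^ β < 1 + β * (t - 1) := by
        have := rpow_one_add_lt_one_add_mul_self hs hs' hβpos hβlt
        rwa [htβ] at this
      nlinarith
    · exact absurd h hβ1
    · -- 1 < β
      have hprod : 0 < β * (β - 1) := mul_pos (by linarith) (by linarith)
      have key : 1 + β * (t - 1) < t ^ β := by
        have := one_add_mul_self_lt_rpow_one_add hs hs' hβgt
        rwa [htβ] at this
      nlinarith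

/-- pointwise inequality underlying the nonnegativity of the Beta
divergence, with the equality case. -/
theorem beta_pointwise_inequality (x y β : ℝ) (hx : 0 < x) (hy : 0 < y)
    (hβ0 : β ≠ 0) (hβ1 : β ≠ 1) :
    0 ≤ 1 / (β * (β - 1)) * x ^ β - 1 / (β - 1) * x * y ^ (β - 1) + 1 / β * y ^ β ∧
      (1 / (β * (β - 1)) * x ^ β - 1 / (β - 1) * x * y ^ (β - 1) + 1 / β * y ^ β = 0
        ↔ x = y) := by
  have hβ1' : β - 1 ≠ 0 := sub_ne_zero.mpr hβ1
  have hc0 : β * (β - 1) ≠ 0 := mul_ne_zero hβ0 hβ1'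
  have hyb : (0:ℝ) < y ^ β := rpow_pos_of_pos hy _
  have hxb : x ^ β = y ^ β * (x / y) ^ β := by
    rw [div_rpow hx.le hy.le, mul_div_cancel₀]
    exact hyb.ne'
  have hyb1 : y ^ (β - 1) = y ^ β / y := by
    rw [rpow_sub hy, rpow_one]
  set E := 1 / (β * (β - 1)) * x ^ β - 1 / (β - 1) * x * y ^ (β - 1) + 1 / β * y ^ β
    with hE
  have hEeq : E = y ^ β / (β * (β - 1)) *
      ((x / y) ^ β - 1 - β * (x / y - 1)) := by
    rw [hE, hxb, hyb1]
    field_simp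
    ring
  by_cases hxy : x = y
  · have : E = 0 := by
      rw [hEeq, hxy, div_self hy.ne', Real.one_rpow]
      ring
    exact ⟨this.ge, by simp [this, hxy]⟩
  · have ht : (0:ℝ) < x / y := by positivity
    have ht1 : x / y ≠ 1 := by
      intro h; exact hxy (by field_simp at h; linarith)
    have hkey := beta_bernoulli_aux ht ht1 hβ0 hβ1
    have hEpos : 0 < E := by
      rw [hEeq]
      have hc2 : 0 < (β * (β - 1))^2 := by positivity
      have hrw : y ^ β / (β * (β - 1)) * ((x / y) ^ β - 1 - β * (x / y - 1)) =
          y ^ β * (β * (β - 1) * ((x / y) ^ β - 1 - β * (x / y - 1))) /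
            (β * (β - 1))^2 := by
        field_simp
      rw [hrw]
      exact div_pos (mul_pos hyb hkey) hc2
    exact ⟨hEpos.le, by constructor <;> intro h <;> [linarith; exact absurd h hxy]⟩
end
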